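/- arXiv:math/9803025 — 2 statements merged into one kernel-verified Lean document; each statement's English description precedes it below -/
import Mathlib

section
/- Let φ: A → Con B be a morphism of dg coalgebras with counit, with components f: A → B, Tg: A → B[-1], h: A → k (so φ(u) = f(u) + Tg(u) + h(u)·e). Define Cφ: Con A → Con B by Cφ(u) = φ(u), Cφ(Tu) = T f(u), Cφ(e) = e. Then Cφ is a morphism of dg coalgebras with counit. -/
set_option linter.unusedSectionVars false
set_option maxHeartbeats 1000000


/-!
STATEMENT 1: If `φ : A → Con B` is a morphism of dg coalgebras with counit, with
components `f : A → B`, `Tg : A → B[-1]`, `h : A → k`, then the map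
`Cφ : Con A → Con B` defined by `Cφ(u) = φ(u)`, `Cφ(Tu) = T f(u)`, `Cφ(e) = e`
is again a morphism of dg coalgebras with counit.
-/

open TensorProduct

structure DGCoalgData (k : Type) [Field k] (A : Type) [AddCommGroup A] [Module k A] where
  d : A →ₗ[k] A
  comul : A →ₗ[k] A ⊗[k] A
  counit : A →ₗ[k] k

structure IsDGCoalg {k : Type} [Field k] {A : Type} [AddCommGroup A] [Module k A]
    (S : DGCoalgData k A) : Prop where
  coassoc :
    (TensorProduct.assoc k A A A).toLinearMap.comp
        ((TensorProduct.map S.comul LinearMap.id).comp S.comul)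
      = (TensorProduct.map LinearMap.id S.comul).comp S.comul
  counit_left :
    (TensorProduct.lid k A).toLinearMap.comp
        ((TensorProduct.map S.counit LinearMap.id).comp S.comul) = LinearMap.id
  counit_right :
    (TensorProduct.rid k A).toLinearMap.comp
        ((TensorProduct.map LinearMap.id S.counit).comp S.comul) = LinearMap.id
  d_sq : S.d.comp S.d = 0
  coderiv :
    S.comul.comp S.d
      = (TensorProduct.map S.d LinearMap.id + TensorProduct.map LinearMap.id S.d).comp S.comul
  counit_d : S.counit.comp S.d = 0

/-- A morphism of dg coalgebras with counit: a linear map intertwining the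
comultiplications, the counits and the differentials. -/
structure IsDGCoalgHom {k : Type} [Field k] {A B : Type}
    [AddCommGroup A] [Module k A] [AddCommGroup B] [Module k B]
    (SA : DGCoalgData k A) (SB : DGCoalgData k B) (φ : A →ₗ[k] B) : Prop where
  comul_comp : SB.comul.comp φ = (TensorProduct.map φ φ).comp SA.comul
  counit_comp : SB.counit.comp φ = SA.counit
  d_comp : SB.d.comp φ = φ.comp SA.d

section Cone

variable {k : Type} [Field k] [CharZero k] {A : Type} [AddCommGroup A] [Module k A]

abbrev Cone (k A : Type) [Field k] [AddCommGroup A] [Module k A] := A × A × k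

def coneιA : A →ₗ[k] Cone k A := LinearMap.inl k A (A × k)
def coneιT : A →ₗ[k] Cone k A :=
  (LinearMap.inr k A (A × k)).comp (LinearMap.inl k A k)
def coneιK : k →ₗ[k] Cone k A :=
  (LinearMap.inr k A (A × k)).comp (LinearMap.inr k A k)
def coneE : Cone k A := coneιK (1 : k)
def conePA : Cone k A →ₗ[k] A := LinearMap.fst k A (A × k)
def conePT : Cone k A →ₗ[k] A := (LinearMap.fst k A k).comp (LinearMap.snd k A (A × k))
def conePK : Cone k A →ₗ[k] k := (LinearMap.snd k A k).comp (LinearMap.snd k A (A × k))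

noncomputable def coneData (S : DGCoalgData k A) : DGCoalgData k (Cone k A) where
  d :=
    (coneιA.comp S.d).comp conePA + coneιA.comp conePT
      - (coneιT.comp S.d).comp conePT - (coneιK.comp S.counit).comp conePT
  comul :=
    ((TensorProduct.map coneιA coneιA).comp S.comul).comp conePA
      + ((TensorProduct.map coneιT coneιA).comp S.comul).comp conePT
      + ((TensorProduct.mk k (Cone k A) (Cone k A) coneE).comp coneιT).comp conePT
      + ((TensorProduct.mk k (Cone k A) (Cone k A) coneE).comp coneιK).comp conePK
  counit := S.counit.comp conePA + conePK

variable {B : Type} [AddCommGroup B] [Module k B]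

/-- The cone `Cφ` of a morphism `φ : A → Con B`: on `A` it is `φ`, on the shifted copy
`A[-1]` it is the shift `T ∘ f` of the first component `f = pr_B ∘ φ`, and it fixes
the vertex `e`. -/
def coneHom (φ : A →ₗ[k] Cone k B) : Cone k A →ₗ[k] Cone k B :=
  φ.comp conePA + (coneιT.comp (conePA.comp φ)).comp conePT + coneιK.comp conePK


section Helpers

variable {k : Type} [Field k] [CharZero k] {A : Type} [AddCommGroup A] [Module k A]
variable {B : Type} [AddCommGroup B] [Module k B]

@[simp] lemma pA_iA (u : A) : conePA (coneιA (k := k) u) = u := rfl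
@[simp] lemma pT_iA (u : A) : conePT (coneιA (k := k) u) = 0 := rfl
@[simp] lemma pK_iA (u : A) : conePK (coneιA (k := k) u) = 0 := rfl
@[simp] lemma pA_iT (u : A) : conePA (coneιT (k := k) u) = 0 := rfl
@[simp] lemma pT_iT (u : A) : conePT (coneιT (k := k) u) = u := rfl
@[simp] lemma pK_iT (u : A) : conePK (coneιT (k := k) u) = 0 := rfl
@[simp] lemma pA_iK (c : k) : conePA (coneιK (A := A) c) = 0 := rfl
@[simp] lemma pT_iK (c : k) : conePT (coneιK (A := A) c) = 0 := rfl
@[simp] lemma pK_iK (c : k) : conePK (coneιK (A := A) c) = c := rfl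
@[simp] lemma pA_e : conePA (coneE (k := k) (A := A)) = 0 := rfl
@[simp] lemma pT_e : conePT (coneE (k := k) (A := A)) = 0 := rfl
@[simp] lemma pK_e : conePK (coneE (k := k) (A := A)) = 1 := rfl

@[simp] lemma pA_iA_c : conePA.comp (coneιA (k := k) (A := A)) = LinearMap.id := rfl
@[simp] lemma pT_iA_c : conePT.comp (coneιA (k := k) (A := A)) = 0 := rfl
@[simp] lemma pK_iA_c : conePK.comp (coneιA (k := k) (A := A)) = 0 := rfl
@[simp] lemma pA_iT_c : conePA.comp (coneιT (k := k) (A := A)) = 0 := rfl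
@[simp] lemma pT_iT_c : conePT.comp (coneιT (k := k) (A := A)) = LinearMap.id := rfl
@[simp] lemma pK_iT_c : conePK.comp (coneιT (k := k) (A := A)) = 0 := rfl
@[simp] lemma pA_iK_c : conePA.comp (coneιK (k := k) (A := A)) = 0 := rfl
@[simp] lemma pT_iK_c : conePT.comp (coneιK (k := k) (A := A)) = 0 := rfl
@[simp] lemma pK_iK_c : conePK.comp (coneιK (k := k) (A := A)) = LinearMap.id := rfl

lemma cone_decomp (x : Cone k A) :
    coneιA (conePA x) + coneιT (conePT x) + coneιK (conePK x) = x := by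
  obtain ⟨a, b, c⟩ := x
  simp [coneιA, coneιT, coneιK, conePA, conePT, conePK, Prod.ext_iff]

lemma cone_ext {C : Type} [AddCommGroup C] [Module k C] {f g : Cone k A →ₗ[k] C}
    (h1 : ∀ u, f (coneιA u) = g (coneιA u)) (h2 : ∀ u, f (coneιT u) = g (coneιT u))
    (h3 : ∀ c, f (coneιK c) = g (coneιK c)) : f = g := by
  refine LinearMap.ext fun x => ?_
  rw [← cone_decomp x]
  simp only [map_add, h1, h2, h3]

@[simp] lemma map_map_apply {M N P Q M' N' : Type}
    [AddCommGroup M] [Module k M] [AddCommGroup N] [Module k N]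
    [AddCommGroup P] [Module k P] [AddCommGroup Q] [Module k Q]
    [AddCommGroup M'] [Module k M'] [AddCommGroup N'] [Module k N']
    (f : M →ₗ[k] N) (g : P →ₗ[k] Q) (f' : M' →ₗ[k] M) (g' : N' →ₗ[k] P)
    (t : M' ⊗[k] N') :
    TensorProduct.map f g (TensorProduct.map f' g' t)
      = TensorProduct.map (f ∘ₗ f') (g ∘ₗ g') t := by
  rw [← LinearMap.comp_apply, ← TensorProduct.map_comp]

end Helpers

section HomHelpers

variable {k : Type} [Field k] [CharZero k] {A : Type} [AddCommGroup A] [Module k A]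
variable {B : Type} [AddCommGroup B] [Module k B] (φ : A →ₗ[k] Cone k B)

@[simp] lemma coneHom_iA (u : A) : coneHom φ (coneιA u) = φ u := by
  simp [coneHom]

@[simp] lemma coneHom_iT (u : A) : coneHom φ (coneιT u) = coneιT (conePA (φ u)) := by
  simp [coneHom]

@[simp] lemma coneHom_iK (c : k) : coneHom φ (coneιK c) = coneιK c := by
  simp [coneHom]

@[simp] lemma coneHom_e : coneHom φ coneE = coneE := coneHom_iK φ 1

@[simp] lemma coneHom_comp_iA : (coneHom φ).comp coneιA = φ :=
  LinearMap.ext fun u => coneHom_iA φ u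

@[simp] lemma coneHom_comp_iT :
    (coneHom φ).comp coneιT = coneιT ∘ₗ (conePA ∘ₗ φ) :=
  LinearMap.ext fun u => coneHom_iT φ u

@[simp] lemma coneHom_comp_iK : (coneHom φ).comp coneιK = coneιK :=
  LinearMap.ext fun u => coneHom_iK φ u

end HomHelpers

/-- If `φ : A → Con B` is a morphism of dg coalgebras with counit,
then `Cφ : Con A → Con B` is again a morphism of dg coalgebras with counit. -/
theorem coneHom_is_hom (SA : DGCoalgData k A) (SB : DGCoalgData k B)
    (hA : IsDGCoalg SA) (hB : IsDGCoalg SB)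
    (φ : A →ₗ[k] Cone k B) (hφ : IsDGCoalgHom SA (coneData SB) φ) :
    IsDGCoalgHom (coneData SA) (coneData SB) (coneHom φ) := by
  have hd := fun u => congrArg (fun ψ => ψ u) hφ.d_comp
  have hcu := fun u => congrArg (fun ψ => ψ u) hφ.counit_comp
  have hcm := fun u => congrArg (fun ψ => ψ u) hφ.comul_comp
  simp only [coneData, LinearMap.comp_apply, LinearMap.add_apply, LinearMap.sub_apply]
    at hd hcu hcm
  constructor
  · refine cone_ext (fun u => ?_) (fun u => ?_) (fun c => ?_)
    · simp only [coneData, LinearMap.comp_apply, LinearMap.add_apply, map_add,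
        coneHom_iA, pA_iA, pT_iA, pK_iA, map_zero, add_zero, zero_add,
        TensorProduct.mk_apply, map_map_apply, coneHom_comp_iA, coneHom_comp_iT,
        coneHom_comp_iK, TensorProduct.map_tmul, coneHom_e,
        TensorProduct.tmul_zero, TensorProduct.zero_tmul]
      exact hcm u
    · have h2 := congrArg (TensorProduct.map conePA LinearMap.id) (hcm u)
      simp only [map_add, map_map_apply, pA_iA_c, pA_iT_c, pK_iA_c,
        TensorProduct.map_tmul, LinearMap.id_comp, LinearMap.comp_id,
        LinearMap.id_coe, id_eq, pA_e, TensorProduct.zero_tmul, add_zero,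
        TensorProduct.map_zero_left, LinearMap.zero_apply,
        TensorProduct.mk_apply, zero_add] at h2
      have h3 := congrArg (TensorProduct.map coneιT LinearMap.id) h2
      simp only [map_map_apply, LinearMap.id_comp, LinearMap.comp_id] at h3
      simp only [coneData, LinearMap.comp_apply, LinearMap.add_apply, map_add,
        coneHom_iT, pA_iT, pT_iT, pK_iT, map_zero, add_zero, zero_add,
        TensorProduct.mk_apply, map_map_apply, coneHom_comp_iA, coneHom_comp_iT,
        coneHom_comp_iK, TensorProduct.map_tmul, coneHom_e,
        TensorProduct.tmul_zero, TensorProduct.zero_tmul]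
      rw [h3]
    · simp only [coneData, LinearMap.comp_apply, LinearMap.add_apply, map_add,
        coneHom_iK, pA_iK, pT_iK, pK_iK, map_zero, add_zero, zero_add,
        TensorProduct.mk_apply, map_map_apply, TensorProduct.map_tmul, coneHom_e,
        TensorProduct.tmul_zero, TensorProduct.zero_tmul]
  · refine cone_ext (fun u => ?_) (fun u => ?_) (fun c => ?_)
    · simp only [coneData, LinearMap.comp_apply, LinearMap.add_apply,
        coneHom_iA, pA_iA, pT_iA, pK_iA, map_zero, add_zero, zero_add]
      exact hcu u
    · simp only [coneData, LinearMap.comp_apply, LinearMap.add_apply,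
        coneHom_iT, pA_iT, pT_iT, pK_iT, map_zero, add_zero, zero_add]
    · simp only [coneData, LinearMap.comp_apply, LinearMap.add_apply,
        coneHom_iK, pA_iK, pT_iK, pK_iK, map_zero, add_zero, zero_add]
  · refine cone_ext (fun u => ?_) (fun u => ?_) (fun c => ?_)
    · simp only [coneData, LinearMap.comp_apply, LinearMap.add_apply, LinearMap.sub_apply,
        coneHom_iA, pA_iA, pT_iA, pK_iA, map_zero, add_zero, zero_add,
        sub_zero, coneHom_iT, coneHom_iK]
      exact hd u
    · have hdA := congrArg conePA (hd u)
      have hcuu := hcu u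
      simp only [map_add, map_sub, pA_iA, pA_iT, pA_iK,
        map_zero, add_zero, zero_add, sub_zero, zero_sub] at hdA
      simp only [coneData, LinearMap.comp_apply, LinearMap.add_apply, LinearMap.sub_apply,
        map_sub, map_add, coneHom_iT, pA_iT, pT_iT, pK_iT, map_zero, add_zero, zero_add,
        sub_zero, zero_sub, coneHom_iA, coneHom_iK]
      rw [← hdA, ← hcuu]
      rw [← cone_decomp (φ u)]
      simp only [map_add, map_sub, pA_iA, pA_iT, pA_iK, pT_iA, pT_iT, pT_iK,
        pK_iA, pK_iT, pK_iK, map_zero, add_zero, zero_add]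
      abel
    · simp only [coneData, LinearMap.comp_apply, LinearMap.add_apply, LinearMap.sub_apply,
        coneHom_iK, pA_iK, pT_iK, pK_iK, map_zero, add_zero, zero_add,
        sub_zero, zero_sub, neg_zero, sub_self]

end Cone
end

section
/- Let V be a graded vector space and ΠTV[1] = ∏_{k≥0} T^k(V[1]) with its p-adic topology. Suppose m is an associative continuous product on ΠTV[1] with unit 1 ∈ T^0V[1] such that the counit ε (projection to T^0) is an algebra morphism and for x ∈ T^kV[1], y ∈ T^lV[1], m(x,y) = x⊗y + z with z ∈ ∏_{r>k+l} T^rV[1]. Then the map φ defined by φ(e_1⊗…⊗e_k) = m(e_1, m(e_2, … , e_k)) for e_i ∈ V[1] and φ(1)=1 extends continuously to ΠTV[1], is invertible with continuous inverse, and conjugation by φ carries m to the standard concatenation product; i.e., any such product is isomorphic to the standard one. -/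
/-!
STATEMENT 8: Any continuous, unital, counital, "upper triangular" associative product
on the completed tensor algebra `ΠTV[1] = ∏_k T^k(V[1])` (with the p-adic topology)
is isomorphic to the standard concatenation product, via the continuous isomorphism
`φ(e₁⊗…⊗e_k) = e₁ * (e₂ * (⋯ * e_k))`, `φ(1) = 1`.
-/

open scoped TensorProduct
open TensorProduct

variable (k : Type) [Field k] [CharZero k] (V : Type) [AddCommGroup V] [Module k V]

abbrev TP (n : ℕ) := (⨂[k]^n V)

/-- The completed tensor algebra `ΠTV = ∏_k T^k V`. -/
abbrev PiT := (n : ℕ) → TP k V n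

variable {k V}

/-- Inclusion of `T^n V` as the elements concentrated in degree `n`. -/
noncomputable def sglT (n : ℕ) : TP k V n →ₗ[k] PiT k V :=
  LinearMap.single k (TP k V) n

/-- Identification of `T^n` along an equality of the exponents. -/
noncomputable def castTP {a b : ℕ} (h : a = b) : TP k V a →ₗ[k] TP k V b :=
  (PiTensorProduct.reindex k (fun _ : Fin a => V) (finCongr h)).toLinearMap

/-- Concatenation of tensors, as a bilinear map `T^i ⊗ T^j → T^{i+j}`. -/
noncomputable def concatT (i j : ℕ) : TP k V i →ₗ[k] TP k V j →ₗ[k] TP k V (i + j) :=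
  TensorProduct.curry
    ((PiTensorProduct.reindex k (fun _ : Fin i ⊕ Fin j => V) finSumFinEquiv).toLinearMap.comp
      (PiTensorProduct.tmulEquiv k V).toLinearMap)

/-- The unit `1 ∈ T⁰V ⊂ ΠTV`. -/
noncomputable def unitPiT : PiT k V :=
  sglT 0 ((PiTensorProduct.isEmptyEquiv (Fin 0)).symm (1 : k))

/-- Continuity of a linear endomorphism of `ΠTV` in the p-adic topology, in which the
subspaces `∏_{k≥l} T^k V` form a base of neighbourhoods of `0`. -/
def CtsPiT (F : PiT k V →ₗ[k] PiT k V) : Prop :=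
  ∀ l : ℕ, ∃ N : ℕ, ∀ x : PiT k V, (∀ j < N, x j = 0) → ∀ j < l, F x j = 0

/-- Joint continuity of a bilinear map on `ΠTV`. -/
def CtsPiT2 (m : PiT k V →ₗ[k] PiT k V →ₗ[k] PiT k V) : Prop :=
  ∀ l : ℕ, ∃ N : ℕ, ∀ x y : PiT k V,
    ((∀ j < N, x j = 0) ∨ (∀ j < N, y j = 0)) → ∀ j < l, m x y j = 0

/-- `sm` is the standard (concatenation) product on `ΠTV`. -/
def IsStdMul (sm : PiT k V →ₗ[k] PiT k V →ₗ[k] PiT k V) : Prop :=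
  ∀ (x y : PiT k V) (n : ℕ),
    sm x y n = ∑ i ∈ (Finset.range (n + 1)).attach,
      castTP (by have := Finset.mem_range.mp i.2; omega)
        (concatT i.1 (n - i.1) (x i.1) (y (n - i.1)))


set_option linter.unusedSectionVars false

/-! Auxiliary development -/

lemma castTP_self {a : ℕ} (h : a = a) (u : TP k V a) : castTP h u = u := by
  simp [castTP, finCongr_refl, PiTensorProduct.reindex_refl]

lemma castTP_castTP {a b c : ℕ} (h1 : a = b) (h2 : b = c) (u : TP k V a) :
    castTP h2 (castTP h1 u) = castTP (h1.trans h2) u := by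
  subst h1; subst h2; simp [castTP_self]

lemma sglT_apply_same (n : ℕ) (u : TP k V n) : (sglT n u : PiT k V) n = u := by
  simp [sglT]

lemma sglT_apply_ne {n j : ℕ} (h : j ≠ n) (u : TP k V n) : (sglT n u : PiT k V) j = 0 := by
  simp [sglT, Pi.single_eq_of_ne h]

lemma sglT_apply_of_eq {a b : ℕ} (h : b = a) (u : TP k V a) :
    (sglT a u : PiT k V) b = castTP h.symm u := by
  subst h; rw [sglT_apply_same, castTP_self]

lemma concatT_cast_right {p a b : ℕ} (h : a = b) (u : TP k V p) (v : TP k V a) :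
    concatT p b u (castTP h v) = castTP (by rw [h]) (concatT p a u v) := by
  subst h; rw [castTP_self, castTP_self]

lemma castTP_tprod {a b : ℕ} (h : a = b) (f : Fin a → V) :
    castTP h (PiTensorProduct.tprod k f) =
      PiTensorProduct.tprod k (fun i => f (Fin.cast h.symm i)) := by
  rw [castTP]
  rw [LinearEquiv.coe_coe, PiTensorProduct.reindex_tprod]
  rfl

lemma concatT_tprod (i j : ℕ) (f : Fin i → V) (g : Fin j → V) :
    concatT i j (PiTensorProduct.tprod k f) (PiTensorProduct.tprod k g) =
      PiTensorProduct.tprod k (fun x => Sum.elim f g (finSumFinEquiv.symm x)) := by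
  rw [concatT]
  rw [TensorProduct.curry_apply, LinearMap.comp_apply]
  erw [PiTensorProduct.tmulEquiv_apply]
  rw [LinearEquiv.coe_coe, PiTensorProduct.reindex_tprod]

lemma elim_symm_eq_append {p q : ℕ} (f : Fin p → V) (g : Fin q → V) :
    (fun x : Fin (p + q) => Sum.elim f g (finSumFinEquiv.symm x)) = Fin.append f g := by
  funext x
  refine Fin.addCases (fun l => ?_) (fun r => ?_) x
  · rw [finSumFinEquiv_symm_apply_castAdd, Sum.elim_inl, Fin.append_left]
  · rw [finSumFinEquiv_symm_apply_natAdd, Sum.elim_inr, Fin.append_right]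

/-- single vector in degree 1 -/
noncomputable def sgl1 : V →ₗ[k] TP k V 1 :=
  (PiTensorProduct.subsingletonEquiv (R := k) (s := fun _ : Fin 1 => V) (0 : Fin 1)).symm.toLinearMap

lemma sgl1_apply (e : V) : sgl1 e = PiTensorProduct.tprod k (fun _ : Fin 1 => e) := by
  simp [sgl1]

section Defs

variable (m : PiT k V →ₗ[k] PiT k V →ₗ[k] PiT k V)

/-- the multilinear map `v ↦ v 0 * (v 1 * ⋯)` -/
noncomputable def PhiM : (K : ℕ) → MultilinearMap k (fun _ : Fin K => V) (PiT k V)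
  | 0 => MultilinearMap.constOfIsEmpty k _ unitPiT
  | (K+1) => LinearMap.uncurryLeft
      { toFun := fun e => (m (sglT 1 (sgl1 e))).compMultilinearMap (PhiM K)
        map_add' := fun a b => by ext v; simp [map_add]
        map_smul' := fun c a => by ext v; simp [map_smul] }

/-- `φ` on degree `K` -/
noncomputable def phiK (K : ℕ) : TP k V K →ₗ[k] PiT k V :=
  PiTensorProduct.lift (PhiM m K)

lemma phiK_tprod (K : ℕ) (v : Fin K → V) :
    phiK m K (PiTensorProduct.tprod k v) = PhiM m K v :=
  PiTensorProduct.lift.tprod v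

lemma phiK_succ_tprod (K : ℕ) (v : Fin (K+1) → V) :
    phiK m (K+1) (PiTensorProduct.tprod k v)
      = m (sglT 1 (sgl1 (v 0))) (phiK m K (PiTensorProduct.tprod k (Fin.tail v))) := by
  rw [phiK_tprod, PhiM, LinearMap.uncurryLeft_apply, LinearMap.coe_mk, AddHom.coe_mk,
    LinearMap.compMultilinearMap_apply, phiK_tprod]

lemma phiK_foldr (K : ℕ) (v : Fin K → V) :
    phiK m K (PiTensorProduct.tprod k v)
      = (List.ofFn fun i : Fin K =>
          sglT 1 (PiTensorProduct.tprod k (fun _ : Fin 1 => v i))).foldr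
          (fun a b => m a b) unitPiT := by
  induction K with
  | zero => rw [phiK_tprod]; simp [PhiM]
  | succ K IH =>
      rw [phiK_succ_tprod, IH (Fin.tail v), List.ofFn_succ, List.foldr_cons, sgl1_apply]
      rfl

/-- the map `φ` -/
noncomputable def phiF : PiT k V →ₗ[k] PiT k V :=
  LinearMap.pi fun n => ∑ K ∈ Finset.range (n+1),
    (LinearMap.proj n).comp ((phiK m K).comp (LinearMap.proj K))

lemma phiF_apply (x : PiT k V) (n : ℕ) :
    phiF m x n = ∑ K ∈ Finset.range (n+1), phiK m K (x K) n := by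
  simp [phiF, LinearMap.pi_apply, LinearMap.sum_apply]

end Defs
section Lower

variable (m : PiT k V →ₗ[k] PiT k V →ₗ[k] PiT k V)
variable (hcts : CtsPiT2 m)
variable (htriang : ∀ (p q : ℕ) (u : TP k V p) (v : TP k V q),
      (∀ j ≤ p + q, m (sglT p u) (sglT q v) j
          = if h : j = p + q then castTP h.symm (concatT p q u v) else 0))

/-- low-degree truncation -/
noncomputable def lowP (M : ℕ) (x : PiT k V) : PiT k V :=
  ∑ i ∈ Finset.range M, sglT i (x i)

lemma lowP_apply (M : ℕ) (x : PiT k V) (i : ℕ) :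
    lowP M x i = if i < M then x i else 0 := by
  rw [lowP, Finset.sum_apply]
  simp only [sglT, LinearMap.coe_single]
  rw [Finset.sum_pi_single]
  simp

lemma highP_apply {M : ℕ} (x : PiT k V) {i : ℕ} (hi : i < M) : (x - lowP M x) i = 0 := by
  have := lowP_apply (k := k) (V := V) M x i
  rw [if_pos hi] at this
  simp [this]

include hcts htriang in
lemma mul_lower {p q : ℕ} (x y : PiT k V)
    (hx : ∀ j < p, x j = 0) (hy : ∀ j < q, y j = 0) :
    ∀ j ≤ p + q, m x y j
      = if h : j = p + q then castTP h.symm (concatT p q (x p) (y q)) else 0 := by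
  intro j hj
  obtain ⟨N, hN⟩ := hcts (p + q + 1)
  set M := max N (p + q + 1) with hM
  have hNM : N ≤ M := le_max_left _ _
  have hpqM : p + q + 1 ≤ M := le_max_right _ _
  have hxh : ∀ i < N, (x - lowP M x) i = 0 := fun i hi => highP_apply x (lt_of_lt_of_le hi hNM)
  have hyh : ∀ i < N, (y - lowP M y) i = 0 := fun i hi => highP_apply y (lt_of_lt_of_le hi hNM)
  have expand : m x y = m (lowP M x) (lowP M y) + m (lowP M x) (y - lowP M y)
      + m (x - lowP M x) (lowP M y) + m (x - lowP M x) (y - lowP M y) := by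
    have hx' : lowP M x + (x - lowP M x) = x := by abel
    have hy' : lowP M y + (y - lowP M y) = y := by abel
    conv_lhs => rw [← hx', ← hy']
    simp only [map_add, LinearMap.add_apply]
    abel
  have hjlt : j < p + q + 1 := by omega
  have term_zero : ∀ i r : ℕ, ¬(i = p ∧ r = q) →
      m (sglT i (x i)) (sglT r (y r)) j = 0 := by
    intro i r hir
    by_cases hip : i < p
    · rw [hx i hip]; simp
    · by_cases hrq : r < q
      · rw [hy r hrq]; simp
      · have hjle : j ≤ i + r := by omega
        rw [htriang i r _ _ j hjle, dif_neg (by omega)]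
  have main : m (lowP M x) (lowP M y) j
      = m (sglT p (x p)) (sglT q (y q)) j := by
    have e1 : m (lowP M x) (lowP M y) j
        = ∑ i ∈ Finset.range M, ∑ r ∈ Finset.range M,
            m (sglT i (x i)) (sglT r (y r)) j := by
      simp only [lowP, map_sum, LinearMap.sum_apply, Finset.sum_apply]
      rw [Finset.sum_comm]
    rw [e1]
    rw [Finset.sum_eq_single_of_mem p (Finset.mem_range.mpr (by omega))]
    · rw [Finset.sum_eq_single_of_mem q (Finset.mem_range.mpr (by omega))]
      intro r _ hrq
      exact term_zero p r (by tauto)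
    · intro i _ hip
      exact Finset.sum_eq_zero fun r _ => term_zero i r (by tauto)
  rw [expand]
  simp only [Pi.add_apply]
  rw [hN (lowP M x) (y - lowP M y) (Or.inr hyh) j hjlt,
    hN (x - lowP M x) (lowP M y) (Or.inl hxh) j hjlt,
    hN (x - lowP M x) (y - lowP M y) (Or.inl hxh) j hjlt, main,
    htriang p q (x p) (y q) j hj]
  abel

end Lower
section Tri

variable (m : PiT k V →ₗ[k] PiT k V →ₗ[k] PiT k V)
variable (hcts : CtsPiT2 m)
variable (htriang : ∀ (p q : ℕ) (u : TP k V p) (v : TP k V q),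
      (∀ j ≤ p + q, m (sglT p u) (sglT q v) j
          = if h : j = p + q then castTP h.symm (concatT p q u v) else 0))

lemma unitPiT_zero : (unitPiT : PiT k V) 0 = PiTensorProduct.tprod k (fun i : Fin 0 => i.elim0) := by
  rw [unitPiT, sglT_apply_same, PiTensorProduct.isEmptyEquiv_symm_apply, one_smul]
  exact congrArg _ (funext fun i => Fin.elim0 i)

include hcts htriang in
lemma phiK_lower (K : ℕ) (u : TP k V K) :
    (∀ j < K, phiK m K u j = 0) ∧ phiK m K u K = u := by
  induction K with
  | zero =>
      refine ⟨fun j hj => absurd hj (Nat.not_lt_zero j), ?_⟩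
      induction u using PiTensorProduct.induction_on with
      | smul_tprod c f =>
          rw [map_smul, Pi.smul_apply, phiK_tprod]
          simp only [PhiM, MultilinearMap.constOfIsEmpty_apply, Function.const_apply]
          rw [unitPiT_zero]
          exact congrArg (fun g : Fin 0 → V => c • PiTensorProduct.tprod k g)
            (funext fun i => Fin.elim0 i)
      | add a b ha hb => rw [map_add, Pi.add_apply, ha, hb]
  | succ K IH =>
      have main : ∀ v : Fin (K+1) → V,
          (∀ j < K+1, phiK m (K+1) (PiTensorProduct.tprod k v) j = 0) ∧
            phiK m (K+1) (PiTensorProduct.tprod k v) (K+1) = PiTensorProduct.tprod k v := by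
        intro v
        rw [phiK_succ_tprod]
        set x := sglT 1 (sgl1 (v 0) : TP k V 1) with hxdef
        set y := phiK m K (PiTensorProduct.tprod k (Fin.tail v)) with hydef
        have hx : ∀ j < 1, x j = 0 := fun j hj => sglT_apply_ne (by omega) _
        have hy : ∀ j < K, y j = 0 := fun j hj => (IH _).1 j hj
        have hml := mul_lower m hcts htriang x y hx hy
        constructor
        · intro j hj
          rw [hml j (by omega), dif_neg (by omega)]
        · have h1 : (K+1 : ℕ) = 1 + K := by omega
          have h2 := hml (K+1) (by omega)
          rw [dif_pos h1] at h2
          rw [h2]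
          have hx1 : x 1 = sgl1 (v 0) := sglT_apply_same _ _
          have hyK : y K = PiTensorProduct.tprod k (Fin.tail v) := (IH _).2
          rw [hx1, hyK, sgl1_apply, concatT_tprod, castTP_tprod]
          congr 1
          funext i
          refine Fin.cases ?_ (fun j => ?_) i
          · have e0 : Fin.cast h1.symm.symm (0 : Fin (K+1)) = Fin.castAdd K (0 : Fin 1) := rfl
            rw [e0, finSumFinEquiv_symm_apply_castAdd, Sum.elim_inl]
          · have ej : Fin.cast h1.symm.symm (Fin.succ j) = Fin.natAdd 1 j := by
              ext; simp [Nat.add_comm]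
            rw [ej, finSumFinEquiv_symm_apply_natAdd, Sum.elim_inr]
            rfl
      induction u using PiTensorProduct.induction_on with
      | smul_tprod c f =>
          obtain ⟨h1, h2⟩ := main f
          exact ⟨fun j hj => by rw [map_smul, Pi.smul_apply, h1 j hj, smul_zero],
            by rw [map_smul, Pi.smul_apply, h2]⟩
      | add a b ha hb =>
          exact ⟨fun j hj => by rw [map_add, Pi.add_apply, ha.1 j hj, hb.1 j hj, add_zero],
            by rw [map_add, Pi.add_apply, ha.2, hb.2]⟩

end Tri
section Inv

variable (m : PiT k V →ₗ[k] PiT k V →ₗ[k] PiT k V)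
variable (hcts : CtsPiT2 m)
variable (htriang : ∀ (p q : ℕ) (u : TP k V p) (v : TP k V q),
      (∀ j ≤ p + q, m (sglT p u) (sglT q v) j
          = if h : j = p + q then castTP h.symm (concatT p q u v) else 0))

include hcts htriang in
lemma phiF_sglT (K : ℕ) (u : TP k V K) : phiF m (sglT K u) = phiK m K u := by
  funext n
  rw [phiF_apply]
  by_cases hK : K ≤ n
  · rw [Finset.sum_eq_single_of_mem K (Finset.mem_range.mpr (by omega))]
    · rw [sglT_apply_same]
    · intro i _ hi
      rw [sglT_apply_ne hi, map_zero, Pi.zero_apply]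
  · rw [Finset.sum_eq_zero, (phiK_lower m hcts htriang K u).1 n (by omega)]
    intro i hi
    rw [sglT_apply_ne (by simp at hi; omega), map_zero, Pi.zero_apply]

include hcts htriang in
lemma phiF_unit : phiF m unitPiT = unitPiT := by
  rw [unitPiT, phiF_sglT m hcts htriang, phiK]
  rw [PiTensorProduct.isEmptyEquiv_symm_apply, one_smul, PiTensorProduct.lift.tprod]
  simp [PhiM]
  rw [unitPiT, PiTensorProduct.isEmptyEquiv_symm_apply, one_smul]

lemma phiF_vanish (x : PiT k V) (l : ℕ) (hx : ∀ j < l, x j = 0) :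
    ∀ j < l, phiF m x j = 0 := by
  intro j hj
  rw [phiF_apply]
  refine Finset.sum_eq_zero fun K hK => ?_
  rw [hx K (by simp at hK; omega), map_zero, Pi.zero_apply]

lemma phiF_cts : CtsPiT (phiF m) := fun l => ⟨l, fun x hx => phiF_vanish m x l hx⟩

/-- the inverse, degreewise -/
noncomputable def psiAux : (n : ℕ) → (PiT k V →ₗ[k] TP k V n)
  | n => LinearMap.proj n - ∑ K ∈ (Finset.range n).attach,
      (LinearMap.proj n) ∘ₗ (phiK m K.1) ∘ₗ (psiAux K.1)
  decreasing_by exact Finset.mem_range.mp K.2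

lemma psiAux_apply (n : ℕ) (x : PiT k V) :
    psiAux m n x = x n - ∑ K ∈ (Finset.range n).attach, phiK m K.1 (psiAux m K.1 x) n := by
  rw [psiAux]
  simp [LinearMap.sub_apply, LinearMap.sum_apply]

/-- the inverse map `ψ` -/
noncomputable def psiF : PiT k V →ₗ[k] PiT k V := LinearMap.pi (psiAux m)

lemma psiF_apply (x : PiT k V) (n : ℕ) : psiF m x n = psiAux m n x := rfl

include hcts htriang in
lemma phiF_psiF (x : PiT k V) : phiF m (psiF m x) = x := by
  funext n
  rw [phiF_apply, Finset.range_add_one, Finset.sum_insert Finset.notMem_range_self]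
  rw [psiF_apply, (phiK_lower m hcts htriang n _).2, psiAux_apply]
  rw [← Finset.sum_attach (Finset.range n) (fun K => phiK m K (psiF m x K) n)]
  simp only [psiF_apply]
  abel

include hcts htriang in
lemma phiF_inj : Function.Injective (phiF m) := by
  intro a b hab
  rw [← sub_eq_zero] at hab ⊢
  set x := a - b with hx
  rw [← map_sub] at hab
  funext n
  simp only [Pi.zero_apply]
  induction n using Nat.strong_induction_on with
  | _ n IH =>
      have h1 : phiF m x n = 0 := by rw [hab]; rfl
      rw [phiF_apply, Finset.range_add_one, Finset.sum_insert Finset.notMem_range_self,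
        (phiK_lower m hcts htriang n _).2] at h1
      have h2 : ∑ K ∈ Finset.range n, phiK m K (x K) n = 0 := by
        refine Finset.sum_eq_zero fun K hK => ?_
        rw [IH K (Finset.mem_range.mp hK), map_zero, Pi.zero_apply]
      rw [h2, add_zero] at h1
      exact h1

lemma psiF_vanish (x : PiT k V) (l : ℕ) (hx : ∀ j < l, x j = 0) :
    ∀ j < l, psiF m x j = 0 := by
  intro j
  induction j using Nat.strong_induction_on with
  | _ j IH =>
      intro hj
      rw [psiF_apply, psiAux_apply, hx j hj, zero_sub, neg_eq_zero]
      refine Finset.sum_eq_zero fun K _ => ?_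
      have : psiAux m K.1 x = 0 := by
        have := IH K.1 (Finset.mem_range.mp K.2) (lt_trans (Finset.mem_range.mp K.2) hj)
        rwa [psiF_apply] at this
      rw [this, map_zero, Pi.zero_apply]

lemma psiF_cts : CtsPiT (psiF m) := fun l => ⟨l, fun x hx => psiF_vanish m x l hx⟩

end Inv
section Mul

variable (m : PiT k V →ₗ[k] PiT k V →ₗ[k] PiT k V)
variable (hcts : CtsPiT2 m)
variable (hassoc : ∀ x y z : PiT k V, m (m x y) z = m x (m y z))
variable (hunitl : ∀ x, m unitPiT x = x)
variable (htriang : ∀ (p q : ℕ) (u : TP k V p) (v : TP k V q),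
      (∀ j ≤ p + q, m (sglT p u) (sglT q v) j
          = if h : j = p + q then castTP h.symm (concatT p q u v) else 0))
variable (sm : PiT k V →ₗ[k] PiT k V →ₗ[k] PiT k V) (hsm : IsStdMul sm)

include hsm in
lemma sm_sgl (p q : ℕ) (u : TP k V p) (v : TP k V q) :
    sm (sglT p u) (sglT q v) = sglT (p+q) (concatT p q u v) := by
  funext n
  rw [hsm]
  by_cases hn : n = p + q
  · subst hn
    rw [Finset.sum_eq_single_of_mem ⟨p, Finset.mem_range.mpr (by omega)⟩
        (Finset.mem_attach _ _)]
    · have e : p + q - p = q := by omega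
      rw [sglT_apply_same, sglT_apply_of_eq e, concatT_cast_right, castTP_castTP,
        castTP_self, sglT_apply_same]
    · intro i _ hip
      have hip' : i.1 ≠ p := fun h => hip (Subtype.ext h)
      rw [sglT_apply_ne hip', map_zero, LinearMap.zero_apply, map_zero]
  · rw [sglT_apply_ne hn]
    refine Finset.sum_eq_zero fun i _ => ?_
    by_cases hip : i.1 = p
    · have : n - i.1 ≠ q := by have := Finset.mem_range.mp i.2; omega
      rw [sglT_apply_ne this, map_zero, map_zero]
    · rw [sglT_apply_ne hip, map_zero, LinearMap.zero_apply, map_zero]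

include hassoc hunitl in
lemma fold_assoc (L : List (PiT k V)) (b : PiT k V) :
    L.foldr (fun a x => m a x) b = m (L.foldr (fun a x => m a x) unitPiT) b := by
  induction L with
  | nil => rw [List.foldr_nil, List.foldr_nil, hunitl b]
  | cons a L IH => rw [List.foldr_cons, List.foldr_cons, IH, hassoc]

include hcts hassoc hunitl htriang in
lemma phiK_concat (p q : ℕ) (u : TP k V p) (v : TP k V q) :
    phiK m (p+q) (concatT p q u v) = m (phiK m p u) (phiK m q v) := by
  induction u using PiTensorProduct.induction_on with
  | smul_tprod c f =>
      induction v using PiTensorProduct.induction_on with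
      | smul_tprod d g =>
          simp only [map_smul, LinearMap.smul_apply, LinearMap.map_smul]
          congr 1
          congr 1
          rw [concatT_tprod, elim_symm_eq_append]
          rw [phiK_foldr, phiK_foldr, phiK_foldr]
          have ofn : (List.ofFn fun i : Fin (p+q) =>
              sglT 1 (PiTensorProduct.tprod k (fun _ : Fin 1 => Fin.append f g i)))
              = (List.ofFn fun i : Fin p =>
                  sglT 1 (PiTensorProduct.tprod k (fun _ : Fin 1 => f i)))
                ++ (List.ofFn fun i : Fin q =>
                  sglT 1 (PiTensorProduct.tprod k (fun _ : Fin 1 => g i))) := by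
            rw [show (fun i : Fin (p+q) =>
                sglT 1 (PiTensorProduct.tprod k (fun _ : Fin 1 => Fin.append f g i)))
              = (fun e : V => sglT 1 (PiTensorProduct.tprod k (fun _ : Fin 1 => e)))
                  ∘ Fin.append f g from rfl]
            rw [← List.map_ofFn, List.ofFn_fin_append, List.map_append,
              List.map_ofFn, List.map_ofFn]
            rfl
          rw [ofn, List.foldr_append, fold_assoc m hassoc hunitl]
      | add v1 v2 h1 h2 =>
          simp only [map_add, LinearMap.map_add] at h1 h2 ⊢
          rw [h1, h2]
  | add u1 u2 h1 h2 =>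
      simp only [map_add, LinearMap.add_apply, LinearMap.map_add] at h1 h2 ⊢
      rw [h1, h2]

include hcts hassoc hunitl htriang hsm in
lemma key_sgl (p q : ℕ) (u : TP k V p) (v : TP k V q) :
    phiF m (sm (sglT p u) (sglT q v)) = m (phiF m (sglT p u)) (phiF m (sglT q v)) := by
  rw [sm_sgl sm hsm, phiF_sglT m hcts htriang, phiF_sglT m hcts htriang,
    phiF_sglT m hcts htriang, phiK_concat m hcts hassoc hunitl htriang]

end Mul
section Final

variable (m : PiT k V →ₗ[k] PiT k V →ₗ[k] PiT k V)
variable (hcts : CtsPiT2 m)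
variable (hassoc : ∀ x y z : PiT k V, m (m x y) z = m x (m y z))
variable (hunitl : ∀ x, m unitPiT x = x)
variable (htriang : ∀ (p q : ℕ) (u : TP k V p) (v : TP k V q),
      (∀ j ≤ p + q, m (sglT p u) (sglT q v) j
          = if h : j = p + q then castTP h.symm (concatT p q u v) else 0))
variable (sm : PiT k V →ₗ[k] PiT k V →ₗ[k] PiT k V) (hsm : IsStdMul sm)

include hsm in
lemma sm_high_left {M : ℕ} (z y' : PiT k V) (hz : ∀ i < M, z i = 0) :
    ∀ K < M, sm z y' K = 0 := by
  intro K hK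
  rw [hsm]
  refine Finset.sum_eq_zero fun i _ => ?_
  have : i.1 < K + 1 := Finset.mem_range.mp i.2
  rw [hz i.1 (by omega), map_zero, LinearMap.zero_apply, map_zero]

include hsm in
lemma sm_high_right {M : ℕ} (z y' : PiT k V) (hz : ∀ i < M, y' i = 0) :
    ∀ K < M, sm z y' K = 0 := by
  intro K hK
  rw [hsm]
  refine Finset.sum_eq_zero fun i _ => ?_
  rw [hz (K - i.1) (by omega), map_zero, map_zero]

include hcts hassoc hunitl htriang hsm in
lemma phiF_mul (x y : PiT k V) : phiF m (sm x y) = m (phiF m x) (phiF m y) := by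
  funext n
  obtain ⟨N, hN⟩ := hcts (n + 1)
  set M := max N (n + 1) with hM
  have hNM : N ≤ M := le_max_left _ _
  have hnM : n + 1 ≤ M := le_max_right _ _
  have expand1 : phiF m (sm (lowP M x) (lowP M y))
      = m (phiF m (lowP M x)) (phiF m (lowP M y)) := by
    simp only [lowP, map_sum, LinearMap.sum_apply]
    refine Finset.sum_congr rfl fun i _ => ?_
    refine Finset.sum_congr rfl fun r _ => ?_
    exact key_sgl m hcts hassoc hunitl htriang sm hsm _ _ _ _
  have hxh : ∀ i < M, (x - lowP M x) i = 0 := fun i hi => highP_apply x hi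
  have hyh : ∀ i < M, (y - lowP M y) i = 0 := fun i hi => highP_apply y hi
  have split_sm : phiF m (sm x y) n = phiF m (sm (lowP M x) (lowP M y)) n := by
    have hx' : lowP M x + (x - lowP M x) = x := by abel
    have hy' : lowP M y + (y - lowP M y) = y := by abel
    have eA : sm (lowP M x) y = sm (lowP M x) (lowP M y) + sm (lowP M x) (y - lowP M y) := by
      conv_lhs => rw [← hy']
      rw [map_add]
    have eB : sm x y = sm (lowP M x) y + sm (x - lowP M x) y := by
      conv_lhs => rw [← hx']
      rw [map_add, LinearMap.add_apply]
    have e1 : sm x y = sm (lowP M x) (lowP M y) + sm (lowP M x) (y - lowP M y)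
        + sm (x - lowP M x) y := by rw [eB, eA]
    rw [e1, map_add, map_add, Pi.add_apply, Pi.add_apply]
    have v1 : phiF m (sm (lowP M x) (y - lowP M y)) n = 0 := by
      refine phiF_vanish m _ (n+1) (fun j hj => ?_) n (by omega)
      exact sm_high_right sm hsm _ _ hyh j (by omega)
    have v2 : phiF m (sm (x - lowP M x) y) n = 0 := by
      refine phiF_vanish m _ (n+1) (fun j hj => ?_) n (by omega)
      exact sm_high_left sm hsm _ _ hxh j (by omega)
    rw [v1, v2, add_zero, add_zero]
  have split_m : m (phiF m x) (phiF m y) n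
      = m (phiF m (lowP M x)) (phiF m (lowP M y)) n := by
    have hx' : lowP M x + (x - lowP M x) = x := by abel
    have hy' : lowP M y + (y - lowP M y) = y := by abel
    have eA : m (phiF m (lowP M x)) (phiF m y)
        = m (phiF m (lowP M x)) (phiF m (lowP M y))
          + m (phiF m (lowP M x)) (phiF m (y - lowP M y)) := by
      conv_lhs => rw [← hy']
      rw [map_add, map_add]
    have eB : m (phiF m x) (phiF m y)
        = m (phiF m (lowP M x)) (phiF m y) + m (phiF m (x - lowP M x)) (phiF m y) := by
      conv_lhs => rw [← hx']
      rw [map_add, map_add, LinearMap.add_apply]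
    have e1 : m (phiF m x) (phiF m y)
        = m (phiF m (lowP M x)) (phiF m (lowP M y))
          + m (phiF m (lowP M x)) (phiF m (y - lowP M y))
          + m (phiF m (x - lowP M x)) (phiF m y) := by rw [eB, eA]
    rw [e1, Pi.add_apply, Pi.add_apply]
    have vx : ∀ j < N, phiF m (x - lowP M x) j = 0 :=
      fun j hj => phiF_vanish m _ M hxh j (by omega)
    have vy : ∀ j < N, phiF m (y - lowP M y) j = 0 :=
      fun j hj => phiF_vanish m _ M hyh j (by omega)
    rw [hN _ _ (Or.inr vy) n (by omega), hN _ _ (Or.inl vx) n (by omega),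
      add_zero, add_zero]
  rw [split_sm, split_m, expand1]

end Final

theorem nonstandard_product_isomorphic_to_standard'
    (m : PiT k V →ₗ[k] PiT k V →ₗ[k] PiT k V)
    (hcts : CtsPiT2 m)
    (hassoc : ∀ x y z : PiT k V, m (m x y) z = m x (m y z))
    (hunitl : ∀ x, m unitPiT x = x)
    (htriang : ∀ (p q : ℕ) (u : TP k V p) (v : TP k V q),
      (∀ j ≤ p + q, m (sglT p u) (sglT q v) j
          = if h : j = p + q then castTP h.symm (concatT p q u v) else 0))
    (sm : PiT k V →ₗ[k] PiT k V →ₗ[k] PiT k V) (hsm : IsStdMul sm) :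
    ∃ φ : PiT k V →ₗ[k] PiT k V,
      CtsPiT φ ∧
      φ unitPiT = unitPiT ∧
      (∀ (K : ℕ) (v : Fin K → V),
        φ (sglT K (PiTensorProduct.tprod k v))
          = (List.ofFn fun i : Fin K =>
              sglT 1 (PiTensorProduct.tprod k (fun _ : Fin 1 => v i))).foldr
              (fun a b => m a b) unitPiT) ∧
      Function.Bijective φ ∧
      (∃ ψ : PiT k V →ₗ[k] PiT k V, CtsPiT ψ ∧ ψ.comp φ = LinearMap.id ∧
        φ.comp ψ = LinearMap.id) ∧
      (∀ x y : PiT k V, φ (sm x y) = m (φ x) (φ y)) := by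
  refine ⟨phiF m, phiF_cts m, phiF_unit m hcts htriang, ?_, ?_, ?_, ?_⟩
  · intro K v
    rw [phiF_sglT m hcts htriang, phiK_foldr]
  · constructor
    · exact phiF_inj m hcts htriang
    · intro y
      exact ⟨psiF m y, phiF_psiF m hcts htriang y⟩
  · refine ⟨psiF m, psiF_cts m, ?_, ?_⟩
    · apply LinearMap.ext
      intro x
      apply phiF_inj m hcts htriang
      rw [LinearMap.comp_apply, phiF_psiF m hcts htriang]
      rfl
    · apply LinearMap.ext
      intro x
      exact phiF_psiF m hcts htriang x
  · exact phiF_mul m hcts hassoc hunitl htriang sm hsm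

/-- Let `m` be a continuous associative product on `ΠTV` with unit
`1 ∈ T⁰V`, for which the projection to `T⁰V` is an algebra morphism and which is
standard to leading order (`m(x,y) = x⊗y + (terms of degree > k+l)` for `x ∈ T^k`,
`y ∈ T^l`).  Then the map `φ`, determined by `φ(1) = 1` and
`φ(e₁⊗…⊗e_K) = e₁ * (e₂ * ⋯ * e_K)`, is a well-defined continuous linear bijection
of `ΠTV` with continuous inverse, intertwining the standard concatenation product
with `m`. -/
theorem nonstandard_product_isomorphic_to_standard
    (m : PiT k V →ₗ[k] PiT k V →ₗ[k] PiT k V)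
    (hcts : CtsPiT2 m)
    (hassoc : ∀ x y z : PiT k V, m (m x y) z = m x (m y z))
    (hunitl : ∀ x, m unitPiT x = x) (hunitr : ∀ x, m x unitPiT = x)
    (hcounit : ∀ x y : PiT k V,
      PiTensorProduct.isEmptyEquiv (Fin 0) (m x y 0)
        = PiTensorProduct.isEmptyEquiv (Fin 0) (x 0) *
            PiTensorProduct.isEmptyEquiv (Fin 0) (y 0))
    (htriang : ∀ (p q : ℕ) (u : TP k V p) (v : TP k V q),
      (∀ j ≤ p + q, m (sglT p u) (sglT q v) j
          = if h : j = p + q then castTP h.symm (concatT p q u v) else 0))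
    (sm : PiT k V →ₗ[k] PiT k V →ₗ[k] PiT k V) (hsm : IsStdMul sm) :
    ∃ φ : PiT k V →ₗ[k] PiT k V,
      CtsPiT φ ∧
      φ unitPiT = unitPiT ∧
      (∀ (K : ℕ) (v : Fin K → V),
        φ (sglT K (PiTensorProduct.tprod k v))
          = (List.ofFn fun i : Fin K =>
              sglT 1 (PiTensorProduct.tprod k (fun _ : Fin 1 => v i))).foldr
              (fun a b => m a b) unitPiT) ∧
      Function.Bijective φ ∧
      (∃ ψ : PiT k V →ₗ[k] PiT k V, CtsPiT ψ ∧ ψ.comp φ = LinearMap.id ∧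
        φ.comp ψ = LinearMap.id) ∧
      (∀ x y : PiT k V, φ (sm x y) = m (φ x) (φ y)) := by
  exact nonstandard_product_isomorphic_to_standard' m hcts hassoc hunitl htriang sm hsm
end
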